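/- arXiv:1802.06269 — 5 statements merged into one kernel-verified Lean document; each statement's English description precedes it below -/
import Mathlib

section
/- For every λ > 0, α > 0, positive integer n, and t > 0, the n-th derivative of t ↦ E_{α,1}(−λ t^α) satisfies (d/dt)^n E_{α,1}(−λ t^α) = −λ t^{α−n} E_{α,α−n+1}(−λ t^α). -/
/-!
Each term `c ^ k τ ^ (αk + β - 1) / Γ(αk + β)` of `τ ^ (β - 1) E_{α,β}(c τ ^ α)` differentiates,
by `Γ(s + 1) = s Γ(s)`, to the corresponding term of `τ ^ (β - 2) E_{α,β-1}(c τ ^ α)`; the bound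
`Γ(x) ≥ e^{-q} q^{x-2}` makes `1/Γ(αk + β)` decay faster than any geometric sequence, which
justifies differentiating termwise. Starting from `β = 1` and iterating, the `n`-th derivative of
`E_{α,1}(c t ^ α)` is `t ^ (-n) E_{α,1-n}(c t ^ α)`, and since `1/Γ(1 - n) = 0` the constant term
of this series drops out, leaving `c t ^ α E_{α,α-n+1}(c t ^ α)`.
-/

/-- The real Mittag-Leffler function `E_{α,β}(x) = ∑_{k=0}^∞ x^k / Γ(αk + β)`,
with the convention `1/Γ(αk+β) = 0` when `αk + β` is a nonpositive integer
(this is how Mathlib's `Real.Gamma` behaves, being `0` at nonpositive integers). -/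
noncomputable def mittagLefflerReal (α β : ℝ) (x : ℝ) : ℝ :=
  ∑' k : ℕ, x ^ k / Real.Gamma (α * (k : ℝ) + β)

open Real Filter Set

-- Unlike `Gamma_add_one`, this also holds at the poles `s = -n`, where Mathlib's `Gamma` is `0`.
lemma inv_Gamma_eq_mul_inv_Gamma_add_one (s : ℝ) : (Gamma s)⁻¹ = s * (Gamma (s + 1))⁻¹ := by
  rcases ne_or_eq s 0 with hs | rfl
  · rw [Gamma_add_one hs, mul_inv, mul_inv_cancel_left₀ hs]
  · simp

lemma exp_neg_mul_rpow_le_Gamma {q x : ℝ} (hq : 1 ≤ q) (hx : 2 ≤ x) :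
    exp (-q) * q ^ (x - 2) ≤ Gamma x := by
  set m : ℕ := ⌊x - 1⌋₊
  have hm_le : (m : ℝ) ≤ x - 1 := Nat.floor_le (by linarith)
  have hm_gt : x - 1 < m + 1 := Nat.lt_floor_add_one _
  have hm_one : (1 : ℝ) ≤ m := by exact_mod_cast Nat.le_floor (by norm_num; linarith)
  have hfact : q ^ m ≤ exp q * m.factorial := by
    have := pow_div_factorial_le_exp q (by linarith) m
    rwa [div_le_iff₀ (by positivity)] at this
  calc exp (-q) * q ^ (x - 2)
      ≤ exp (-q) * q ^ m := by
        rw [← rpow_natCast]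
        gcongr
        linarith
    _ ≤ m.factorial := by
        rw [exp_neg, inv_mul_le_iff₀ (exp_pos q)]; exact hfact
    _ = Gamma (m + 1) := (Gamma_nat_eq_factorial m).symm
    _ ≤ Gamma x :=
        Gamma_strictMonoOn_Ici.monotoneOn (by simp; linarith) (by simp; linarith) (by linarith)

lemma summable_norm_pow_div_Gamma {α : ℝ} (hα : 0 < α) (β x : ℝ) :
    Summable fun k : ℕ => ‖x ^ k / Gamma (α * k + β)‖ := by
  -- With `q ^ α ≥ 2|x|`, the terms with `αk + β ≥ 2` are at most `e^q q^(2-β) 2^(-k)`.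
  set q : ℝ := max 1 ((2 * |x|) ^ α⁻¹)
  have hq : 1 ≤ q := le_max_left _ _
  have hq0 : 0 < q := one_pos.trans_le hq
  have hqα : 2 * |x| ≤ q ^ α := by
    calc 2 * |x| = ((2 * |x|) ^ α⁻¹) ^ α := by
          rw [← rpow_mul (by positivity), inv_mul_cancel₀ hα.ne', rpow_one]
      _ ≤ q ^ α := by gcongr; exact le_max_right _ _
  refine .of_norm_bounded_eventually_nat
    (summable_geometric_two.mul_left (exp q * q ^ (2 - β))) ?_
  obtain ⟨N, hN⟩ := exists_nat_ge ((2 - β) / α)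
  filter_upwards [eventually_ge_atTop N] with k hk
  have hk2 : 2 ≤ α * k + β := by
    have : (2 - β) / α ≤ k := hN.trans (by exact_mod_cast hk)
    rw [div_le_iff₀ hα] at this
    linarith
  have hΓ := exp_neg_mul_rpow_le_Gamma hq hk2
  have hq_pow : q ^ (α * k + β - 2) = (q ^ α) ^ k / q ^ (2 - β) := by
    rw [show α * k + β - 2 = α * k - (2 - β) by ring, rpow_sub hq0, rpow_mul hq0.le,
      rpow_natCast]
  rw [norm_norm, norm_div, norm_pow, Real.norm_eq_abs, Real.norm_eq_abs,
    abs_of_pos (hΓ.trans_lt' (by positivity)), div_le_iff₀ (hΓ.trans_lt' (by positivity))]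
  calc |x| ^ k ≤ (q ^ α / 2) ^ k := by gcongr; linarith
    _ = exp q * q ^ (2 - β) * (1 / 2) ^ k * (exp (-q) * q ^ (α * k + β - 2)) := by
        rw [hq_pow, exp_neg, div_pow, one_div_pow]
        field_simp
    _ ≤ exp q * q ^ (2 - β) * (1 / 2) ^ k * Gamma (α * k + β) := by gcongr

lemma hasDerivAt_rpow_sub_one_div_Gamma (β : ℝ) {z : ℝ} (hz : 0 < z) :
    HasDerivAt (fun y => y ^ (β - 1) / Gamma β) (z ^ (β - 2) / Gamma (β - 1)) z := by
  refine ((hasDerivAt_rpow_const (p := β - 1) (Or.inl hz.ne')).div_const _).congr_deriv ?_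
  rw [div_eq_mul_inv, div_eq_mul_inv, inv_Gamma_eq_mul_inv_Gamma_add_one (β - 1), sub_add_cancel]
  ring_nf

lemma rpow_le_rpow_add_rpow_of_mem_Icc {a b y : ℝ} (ha : 0 < a) (hy : y ∈ Icc a b) (s : ℝ) :
    y ^ s ≤ a ^ s + b ^ s := by
  have := rpow_pos_of_pos ha s
  have := rpow_pos_of_pos (ha.trans_le (hy.1.trans hy.2)) s
  rcases le_total 0 s with hs | hs
  · linarith [rpow_le_rpow (ha.le.trans hy.1) hy.2 hs]
  · linarith [rpow_le_rpow_of_nonpos ha hy.1 hs]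

lemma hasSum_mittagLefflerReal {α : ℝ} (hα : 0 < α) (β x : ℝ) :
    HasSum (fun k : ℕ => x ^ k / Gamma (α * k + β)) (mittagLefflerReal α β x) :=
  (summable_norm_pow_div_Gamma hα β x).of_norm.hasSum

lemma hasSum_rpow_mul_mittagLefflerReal {α : ℝ} (hα : 0 < α) (β c : ℝ) {τ : ℝ} (hτ : 0 < τ) :
    HasSum (fun k : ℕ => c ^ k * (τ ^ (α * k + β - 1) / Gamma (α * k + β)))
      (τ ^ (β - 1) * mittagLefflerReal α β (c * τ ^ α)) := by
  refine ((hasSum_mittagLefflerReal hα β (c * τ ^ α)).mul_left (τ ^ (β - 1))).congr_fun fun k => ?_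
  rw [add_sub_assoc, rpow_add hτ, rpow_mul hτ.le, rpow_natCast, mul_pow]
  ring

theorem hasDerivAt_rpow_mul_mittagLefflerReal {α : ℝ} (hα : 0 < α) (β c : ℝ) {t : ℝ}
    (ht : 0 < t) :
    HasDerivAt (fun τ => τ ^ (β - 1) * mittagLefflerReal α β (c * τ ^ α))
      (t ^ (β - 2) * mittagLefflerReal α (β - 1) (c * t ^ α)) t := by
  have ht_mem : t ∈ Ioo (t / 2) (2 * t) := ⟨by linarith, by linarith⟩
  have hseries : HasDerivAt (fun τ => ∑' k : ℕ, c ^ k * (τ ^ (α * k + β - 1) / Gamma (α * k + β)))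
      (∑' k : ℕ, c ^ k * (t ^ (α * k + (β - 1) - 1) / Gamma (α * k + (β - 1)))) t := by
    refine hasDerivAt_tsum_of_isPreconnected
      (g := fun (k : ℕ) τ => c ^ k * (τ ^ (α * k + β - 1) / Gamma (α * k + β)))
      (g' := fun (k : ℕ) τ => c ^ k * (τ ^ (α * k + (β - 1) - 1) / Gamma (α * k + (β - 1))))
      (u := fun k : ℕ => ((t / 2) ^ (β - 2) + (2 * t) ^ (β - 2)) *
        ‖(|c| * (2 * t) ^ α) ^ k / Gamma (α * k + (β - 1))‖)
      ((summable_norm_pow_div_Gamma hα _ _).mul_left _) isOpen_Ioo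
      (convex_Ioo _ _).isPreconnected (fun k y hy => ?_) (fun k y hy => ?_) ht_mem
      (hasSum_rpow_mul_mittagLefflerReal hα β c ht).summable ht_mem
    · refine ((hasDerivAt_rpow_sub_one_div_Gamma (α * k + β)
        ((half_pos ht).trans hy.1)).const_mul (c ^ k)).congr_deriv ?_
      ring_nf
    · have hy0 : 0 < y := (half_pos ht).trans hy.1
      have hpow : y ^ (α * k + (β - 1) - 1)
          ≤ ((2 * t) ^ α) ^ k * ((t / 2) ^ (β - 2) + (2 * t) ^ (β - 2)) := by
        rw [show α * k + (β - 1) - 1 = α * k + (β - 2) by ring, rpow_add hy0, rpow_mul hy0.le,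
          rpow_natCast]
        gcongr
        · exact hy.2.le
        · exact rpow_le_rpow_add_rpow_of_mem_Icc (half_pos ht) (Ioo_subset_Icc_self hy) _
      have h2t : 0 < 2 * t := by linarith
      simp only [norm_mul, norm_div, norm_pow, Real.norm_eq_abs, abs_abs,
        abs_of_pos (rpow_pos_of_pos hy0 _), abs_of_pos (rpow_pos_of_pos h2t _)]
      calc _ = |c| ^ k / |Gamma (α * k + (β - 1))| * y ^ (α * k + (β - 1) - 1) := by ring
        _ ≤ |c| ^ k / |Gamma (α * k + (β - 1))| *
            (((2 * t) ^ α) ^ k * ((t / 2) ^ (β - 2) + (2 * t) ^ (β - 2))) := by gcongr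
        _ = _ := by ring
  rw [(hasSum_rpow_mul_mittagLefflerReal hα (β - 1) c ht).tsum_eq,
    show β - 1 - 1 = β - 2 by ring] at hseries
  refine hseries.congr_of_eventuallyEq ?_
  filter_upwards [Ioi_mem_nhds ht] with τ hτ
  exact (hasSum_rpow_mul_mittagLefflerReal hα β c hτ).tsum_eq.symm

lemma mittagLefflerReal_eq_inv_Gamma_add_mul {α : ℝ} (hα : 0 < α) (β x : ℝ) :
    mittagLefflerReal α β x = (Gamma β)⁻¹ + x * mittagLefflerReal α (α + β) x := by
  rw [mittagLefflerReal, (hasSum_mittagLefflerReal hα β x).summable.tsum_eq_zero_add,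
    mittagLefflerReal, ← tsum_mul_left]
  congr 1
  · simp
  · refine tsum_congr fun k => ?_
    push_cast
    ring_nf

lemma iteratedDeriv_mittagLefflerReal_one {α : ℝ} (hα : 0 < α) (c : ℝ) (m : ℕ) {t : ℝ}
    (ht : 0 < t) :
    iteratedDeriv m (fun τ => mittagLefflerReal α 1 (c * τ ^ α)) t
      = t ^ (-(m : ℝ)) * mittagLefflerReal α (1 - m) (c * t ^ α) := by
  induction m generalizing t with
  | zero => simp
  | succ m ih =>
    have hev : iteratedDeriv m (fun τ => mittagLefflerReal α 1 (c * τ ^ α)) =ᶠ[nhds t]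
        fun τ => τ ^ ((1 - m : ℝ) - 1) * mittagLefflerReal α (1 - m) (c * τ ^ α) := by
      filter_upwards [Ioi_mem_nhds ht] with τ hτ
      rw [ih hτ, sub_sub_cancel_left]
    rw [iteratedDeriv_succ, hev.deriv_eq, (hasDerivAt_rpow_mul_mittagLefflerReal hα _ c ht).deriv]
    push_cast
    ring_nf

theorem iteratedDeriv_mittagLeffler_general (α lam : ℝ) (hα : 0 < α)
    (n : ℕ) (hn : 1 ≤ n) (t : ℝ) (ht : 0 < t) :
    iteratedDeriv n (fun τ : ℝ => mittagLefflerReal α 1 (-(lam * τ ^ α))) t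
      = -lam * t ^ (α - (n : ℝ)) * mittagLefflerReal α (α - (n : ℝ) + 1) (-(lam * t ^ α)) := by
  have hΓ : Gamma (1 - n) = 0 := by
    obtain ⟨m, rfl⟩ := Nat.exists_eq_add_of_le' hn
    simpa using Gamma_neg_nat_eq_zero m
  simp_rw [← neg_mul]
  rw [iteratedDeriv_mittagLefflerReal_one hα (-lam) n ht, mittagLefflerReal_eq_inv_Gamma_add_mul hα,
    hΓ, inv_zero, zero_add, show α + (1 - n) = α - n + 1 by ring, rpow_sub ht, rpow_neg ht.le]
  ring

/-- For `λ > 0`, `α > 0`, a positive integer `n` and `t > 0`,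
`(d/dt)^n E_{α,1}(−λ t^α) = −λ t^{α−n} E_{α,α−n+1}(−λ t^α)`. -/
theorem iteratedDeriv_mittagLeffler (α lam : ℝ) (hα : 0 < α) (hlam : 0 < lam)
    (n : ℕ) (hn : 1 ≤ n) (t : ℝ) (ht : 0 < t) :
    iteratedDeriv n (fun τ : ℝ => mittagLefflerReal α 1 (-(lam * τ ^ α))) t
      = -lam * t ^ (α - (n : ℝ)) * mittagLefflerReal α (α - (n : ℝ) + 1) (-(lam * t ^ α)) :=
  iteratedDeriv_mittagLeffler_general α lam hα n hn t ht
end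

section
/- For every 0 < α < 1 and every x ≥ 0, one has E_{α,α}(−x) ≥ 0. -/
/-!
Euler's limit formula approximates `1 / Γ(s)` by `s (s + 1) ⋯ (s + n) / (n ^ s n!) = 1 / GammaSeq s n`.
Substituting it termwise, `E_{α,β}(-x)` becomes the limit of series which, with `y = x / n ^ α`, are
positive multiples of `∑_k (αk + β)(αk + β + 1) ⋯ (αk + β + n) (-y) ^ k`. The summand is a polynomial
in `k` of degree `n + 1`, so this generating function equals `Q(-y) / (1 + y) ^ (n + 2)` for a
polynomial `Q`; the recurrence for the coefficients of `Q` keeps `(-1) ^ m [t ^ m] Q` nonnegative as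
long as `0 < α ≤ 1` and `α ≤ β`, so every approximant is nonnegative. Since `GammaSeq s n` increases
with `n`, the approximant at a fixed `n₀` with `x < n₀ ^ α` dominates all later ones termwise, and
dominated convergence carries nonnegativity to the limit.
-/

open Finset

/-- `risingGFCoeff α β p m` is the coefficient of `t ^ m` in the polynomial `Q` with
`∑_k (αk + β)(αk + β + 1) ⋯ (αk + β + p - 1) t ^ k = Q t / (1 - t) ^ (p + 1)`; the recurrence
is the effect of the operator `α t d/dt + β + p` on `Q t / (1 - t) ^ (p + 1)`. -/
noncomputable def risingGFCoeff (α β : ℝ) : ℕ → ℕ → ℝ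
  | 0, 0 => 1
  | 0, _ + 1 => 0
  | p + 1, 0 => (β + p) * risingGFCoeff α β p 0
  | p + 1, m + 1 => (α * (m + 1) + β + p) * risingGFCoeff α β p (m + 1)
      + (α * (p + 1 - m : ℝ) - β - p) * risingGFCoeff α β p m

theorem risingGFCoeff_eq_zero_of_lt (α β : ℝ) {p m : ℕ} (h : p < m) :
    risingGFCoeff α β p m = 0 := by
  induction p generalizing m with
  | zero => obtain ⟨m, rfl⟩ := Nat.exists_eq_add_one.2 h; rfl
  | succ p ih =>
    obtain ⟨m, rfl⟩ := Nat.exists_eq_add_one.2 (Nat.zero_lt_of_lt h)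
    simp only [risingGFCoeff, ih (by omega : p < m + 1), ih (by omega : p < m), mul_zero, add_zero]

theorem add_one_mul_cast_choose_add_one (N p : ℕ) :
    ((p : ℝ) + 1) * (N.choose (p + 1) : ℝ) = ((N : ℝ) - p) * (N.choose p : ℝ) := by
  rcases lt_or_ge N p with h | h
  · simp [Nat.choose_eq_zero_of_lt h, Nat.choose_eq_zero_of_lt (h.trans (Nat.lt_succ_self p))]
  · rw [← Nat.cast_sub h]
    norm_cast
    rw [mul_comm, Nat.choose_succ_right_eq, mul_comm]

/-- Multiplication by `αk + β + p` in the basis `k ↦ (k + p - m).choose p`, the coefficients of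
`t ^ m / (1 - t) ^ (p + 1)`. -/
theorem mul_cast_choose_eq_add_mul_cast_choose (α β : ℝ) {p m : ℕ} (k : ℕ) (hm : m ≤ p) :
    (α * k + β + p) * ((k + p - m).choose p : ℝ)
      = (α * m + β + p) * ((k + (p + 1) - m).choose (p + 1) : ℝ)
        + (α * (p + 1 - m : ℝ) - β - p) * ((k + (p + 1) - (m + 1)).choose (p + 1) : ℝ) := by
  set N := k + p - m with hN
  have hk : (k : ℝ) = N - p + m := by rw [hN, Nat.cast_sub (by omega)]; push_cast; ring
  rw [show k + (p + 1) - m = N + 1 by omega, show k + (p + 1) - (m + 1) = N by omega]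
  have h1 : ((p : ℝ) + 1) * ((N + 1).choose (p + 1) : ℝ) = ((N : ℝ) + 1) * (N.choose p : ℝ) := by
    exact_mod_cast by rw [mul_comm, ← Nat.add_one_mul_choose_eq]
  have h2 := add_one_mul_cast_choose_add_one N p
  apply mul_left_cancel₀ (by positivity : ((p : ℝ) + 1) ≠ 0)
  linear_combination (-(α * m + β + p)) * h1 - (α * (p + 1 - m : ℝ) - β - p) * h2
    + ((p : ℝ) + 1) * (N.choose p : ℝ) * α * hk

theorem prod_eq_sum_risingGFCoeff_mul_choose (α β : ℝ) (p k : ℕ) :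
    ∏ j ∈ range p, (α * k + β + j)
      = ∑ m ∈ range (p + 1), risingGFCoeff α β p m * ((k + p - m).choose p : ℝ) := by
  induction p with
  | zero => simp [risingGFCoeff]
  | succ p ih =>
    set E : ℕ → ℝ := fun m ↦ ((k + (p + 1) - m).choose (p + 1) : ℝ)
    set c := risingGFCoeff α β p
    have hc : c (p + 1) = 0 := risingGFCoeff_eq_zero_of_lt α β (Nat.lt_succ_self p)
    calc ∏ j ∈ range (p + 1), (α * k + β + j)
        = ∑ m ∈ range (p + 1), ((α * m + β + p) * c m * E m
            + (α * (p + 1 - m : ℝ) - β - p) * c m * E (m + 1)) := by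
          rw [prod_range_succ, ih, sum_mul]
          refine sum_congr rfl fun m hm ↦ ?_
          rw [mul_assoc, mul_comm _ (α * k + β + p),
            mul_cast_choose_eq_add_mul_cast_choose α β k (Nat.lt_succ_iff.1 (mem_range.1 hm))]
          ring
      _ = ∑ m ∈ range (p + 1 + 1), (α * m + β + p) * c m * E m
            + ∑ m ∈ range (p + 1), (α * (p + 1 - m : ℝ) - β - p) * c m * E (m + 1) := by
          rw [sum_add_distrib, sum_range_succ _ (p + 1), hc]
          simp
      _ = ∑ m ∈ range (p + 1 + 1), risingGFCoeff α β (p + 1) m * E m := by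
          simp only [sum_range_succ' _ (p + 1), risingGFCoeff]
          rw [add_right_comm, ← sum_add_distrib]
          push_cast
          congr 1
          · exact sum_congr rfl fun m _ ↦ by ring
          · ring

theorem hasSum_choose_sub_mul_geometric {𝕜 : Type*} [NormedField 𝕜] {p m : ℕ} (hm : m ≤ p)
    {t : 𝕜} (ht : ‖t‖ < 1) :
    HasSum (fun k : ℕ ↦ ((k + p - m).choose p : 𝕜) * t ^ k) (t ^ m / (1 - t) ^ (p + 1)) := by
  rw [← hasSum_nat_add_iff' m]
  have hvanish : ∑ i ∈ range m, ((i + p - m).choose p : 𝕜) * t ^ i = 0 :=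
    sum_eq_zero fun i hi ↦ by
      rw [Nat.choose_eq_zero_of_lt (by have := mem_range.1 hi; omega), Nat.cast_zero, zero_mul]
  rw [hvanish, sub_zero, ← mul_one_div]
  refine ((hasSum_choose_mul_geometric_of_norm_lt_one p ht).mul_left (t ^ m)).congr_fun fun k ↦ ?_
  rw [show k + m + p - m = k + p by omega, pow_add]
  ring

theorem hasSum_prod_mul_geometric (α β : ℝ) (p : ℕ) {t : ℝ} (ht : |t| < 1) :
    HasSum (fun k : ℕ ↦ (∏ j ∈ range p, (α * k + β + j)) * t ^ k)
      ((∑ m ∈ range (p + 1), risingGFCoeff α β p m * t ^ m) / (1 - t) ^ (p + 1)) := by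
  simp_rw [sum_div, mul_div_assoc]
  refine (hasSum_sum fun m hm ↦ (hasSum_choose_sub_mul_geometric
    (Nat.lt_succ_iff.1 (mem_range.1 hm)) ht).mul_left (risingGFCoeff α β p m)).congr_fun fun k ↦ ?_
  rw [prod_eq_sum_risingGFCoeff_mul_choose, sum_mul]
  exact sum_congr rfl fun m _ ↦ by ring

theorem neg_one_pow_mul_risingGFCoeff_nonneg {α β : ℝ} (hα0 : 0 ≤ α) (hα1 : α ≤ 1)
    (hαβ : α ≤ β) (p m : ℕ) : 0 ≤ (-1) ^ m * risingGFCoeff α β p m := by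
  induction p generalizing m with
  | zero => cases m <;> simp [risingGFCoeff]
  | succ p ih =>
    cases m with
    | zero => simpa [risingGFCoeff] using mul_nonneg (by linarith : 0 ≤ β + p) (by simpa using ih 0)
    | succ m =>
      have hA : 0 ≤ α * (m + 1) + β + p := by have := hα0.trans hαβ; positivity
      have hB : 0 ≤ β + p - α * (p + 1 - m : ℝ) := by
        nlinarith [(Nat.cast_nonneg m : (0:ℝ) ≤ m), (Nat.cast_nonneg p : (0:ℝ) ≤ p)]
      calc (0 : ℝ) ≤ (α * (m + 1) + β + p) * ((-1) ^ (m + 1) * risingGFCoeff α β p (m + 1))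
            + (β + p - α * (p + 1 - m : ℝ)) * ((-1) ^ m * risingGFCoeff α β p m) :=
            add_nonneg (mul_nonneg hA (ih _)) (mul_nonneg hB (ih _))
        _ = _ := by simp only [risingGFCoeff]; ring

theorem pow_div_GammaSeq_eq (α β z : ℝ) (k : ℕ) {n : ℕ} (hn : n ≠ 0) :
    z ^ k / Real.GammaSeq (α * k + β) n
      = (∏ j ∈ range (n + 1), (α * k + β + j)) * (z / (n : ℝ) ^ α) ^ k
        / ((n : ℝ) ^ β * n.factorial) := by
  have hn' : (0 : ℝ) < n := Nat.cast_pos.2 (Nat.pos_of_ne_zero hn)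
  have hpow : (n : ℝ) ^ (α * k + β) = ((n : ℝ) ^ α) ^ k * (n : ℝ) ^ β := by
    rw [Real.rpow_add hn', Real.rpow_mul hn'.le, Real.rpow_natCast]
  have : (0 : ℝ) < (n : ℝ) ^ α := by positivity
  have : (0 : ℝ) < (n : ℝ) ^ β := by positivity
  rw [Real.GammaSeq, hpow, div_pow]
  field_simp

theorem hasSum_pow_div_GammaSeq (α β : ℝ) {n : ℕ} (hn : n ≠ 0) {z : ℝ}
    (hz : |z| < (n : ℝ) ^ α) :
    HasSum (fun k : ℕ ↦ z ^ k / Real.GammaSeq (α * k + β) n)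
      ((∑ m ∈ range (n + 2), risingGFCoeff α β (n + 1) m * (z / (n : ℝ) ^ α) ^ m)
        / (1 - z / (n : ℝ) ^ α) ^ (n + 2) / ((n : ℝ) ^ β * n.factorial)) := by
  have hnα : (0 : ℝ) < (n : ℝ) ^ α := by positivity
  have ht : |z / (n : ℝ) ^ α| < 1 := by rwa [abs_div, abs_of_pos hnα, div_lt_one hnα]
  simp_rw [pow_div_GammaSeq_eq α β z _ hn]
  exact (hasSum_prod_mul_geometric α β (n + 1) ht).div_const _

theorem tsum_neg_pow_div_GammaSeq_nonneg {α β x : ℝ} (hα0 : 0 ≤ α) (hα1 : α ≤ 1)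
    (hαβ : α ≤ β) {n : ℕ} (hn : n ≠ 0) (hx0 : 0 ≤ x) (hx : x < (n : ℝ) ^ α) :
    0 ≤ ∑' k : ℕ, (-x) ^ k / Real.GammaSeq (α * k + β) n := by
  rw [(hasSum_pow_div_GammaSeq α β hn (by rwa [abs_neg, abs_of_nonneg hx0])).tsum_eq]
  have hy : 0 ≤ x / (n : ℝ) ^ α := by positivity
  refine div_nonneg (div_nonneg (sum_nonneg fun m _ ↦ ?_) ?_) (by positivity)
  · rw [neg_div, neg_pow, mul_left_comm, ← mul_assoc]
    exact mul_nonneg (neg_one_pow_mul_risingGFCoeff_nonneg hα0 hα1 hαβ _ _) (by positivity)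
  · rw [neg_div, sub_neg_eq_add]; positivity

namespace Real

theorem rpow_mul_add_one_add_le {x s : ℝ} (hx : 0 < x) (hs : 0 ≤ s) :
    x ^ s * (x + 1 + s) ≤ (x + 1) ^ s * (x + 1) := by
  have hlog : 1 / (x + 1) ≤ log ((x + 1) / x) := by
    have := one_sub_inv_le_log_of_pos (by positivity : 0 < (x + 1) / x)
    rwa [inv_div, one_sub_div (by positivity), add_sub_cancel_left] at this
  have hratio : 1 + s / (x + 1) ≤ ((x + 1) / x) ^ s := by
    rw [rpow_def_of_pos (by positivity), add_comm]
    calc s / (x + 1) + 1 ≤ exp (s / (x + 1)) := add_one_le_exp _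
      _ ≤ exp (log ((x + 1) / x) * s) := by
        gcongr
        rw [mul_comm, ← mul_one_div]
        exact mul_le_mul_of_nonneg_left hlog hs
  calc x ^ s * (x + 1 + s) = x ^ s * (x + 1) * (1 + s / (x + 1)) := by field_simp
    _ ≤ x ^ s * (x + 1) * ((x + 1) / x) ^ s := by gcongr
    _ = (x + 1) ^ s * (x + 1) := by
      rw [div_rpow (by positivity) hx.le]
      field_simp

theorem GammaSeq_le_GammaSeq_succ {s : ℝ} (hs : 0 < s) {n : ℕ} (hn : n ≠ 0) :
    GammaSeq s n ≤ GammaSeq s (n + 1) := by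
  have hn' : (0 : ℝ) < n := Nat.cast_pos.2 (Nat.pos_of_ne_zero hn)
  have hP : 0 < ∏ j ∈ range (n + 1), (s + j) := prod_pos fun j _ ↦ by positivity
  have key := rpow_mul_add_one_add_le hn' hs.le
  rw [GammaSeq, GammaSeq, prod_range_succ _ (n + 1), div_le_div_iff₀ hP (by positivity),
    Nat.factorial_succ]
  push_cast
  calc (n : ℝ) ^ s * n.factorial * ((∏ j ∈ range (n + 1), (s + j)) * (s + (n + 1)))
      = (n : ℝ) ^ s * (n + 1 + s) * (n.factorial * ∏ j ∈ range (n + 1), (s + j)) := by ring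
    _ ≤ (n + 1 : ℝ) ^ s * (n + 1) * (n.factorial * ∏ j ∈ range (n + 1), (s + j)) := by gcongr
    _ = _ := by ring

theorem GammaSeq_le_GammaSeq {s : ℝ} (hs : 0 < s) {m n : ℕ} (hm : m ≠ 0) (hmn : m ≤ n) :
    GammaSeq s m ≤ GammaSeq s n := by
  induction n, hmn using Nat.le_induction with
  | base => exact le_rfl
  | succ n hmn ih => exact ih.trans (GammaSeq_le_GammaSeq_succ hs (by omega))

theorem GammaSeq_pos {s : ℝ} (hs : 0 < s) {n : ℕ} (hn : n ≠ 0) : 0 < GammaSeq s n := by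
  have : (0 : ℝ) < n := Nat.cast_pos.2 (Nat.pos_of_ne_zero hn)
  unfold GammaSeq
  positivity

end Real

open Filter Topology in
theorem mittagLefflerReal_neg_nonneg {α β x : ℝ} (hα0 : 0 < α) (hα1 : α ≤ 1) (hαβ : α ≤ β)
    (hx : 0 ≤ x) : 0 ≤ mittagLefflerReal α β (-x) := by
  have hs : ∀ k : ℕ, 0 < α * k + β := fun k ↦ by have := hα0.trans_le hαβ; positivity
  obtain ⟨n₀, hn₀x, hn₀⟩ : ∃ n₀ : ℕ, x < (n₀ : ℝ) ^ α ∧ n₀ ≠ 0 :=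
    ((((tendsto_rpow_atTop hα0).comp tendsto_natCast_atTop_atTop).eventually_gt_atTop x).and
      (eventually_ne_atTop 0)).exists
  have hlim : Tendsto (fun n ↦ ∑' k : ℕ, (-x) ^ k / Real.GammaSeq (α * k + β) n) atTop
      (𝓝 (mittagLefflerReal α β (-x))) := by
    refine tendsto_tsum_of_dominated_convergence
      (bound := fun k : ℕ ↦ x ^ k / Real.GammaSeq (α * k + β) n₀)
      (hasSum_pow_div_GammaSeq α β hn₀ (by rwa [abs_of_nonneg hx])).summable
      (fun k ↦ tendsto_const_nhds.div (Real.GammaSeq_tendsto_Gamma _)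
        (Real.Gamma_pos_of_pos (hs k)).ne') ?_
    filter_upwards [eventually_ge_atTop n₀] with n hn k
    have hn' : n ≠ 0 := by omega
    rw [norm_div, norm_pow, norm_neg, Real.norm_of_nonneg hx,
      Real.norm_of_nonneg (Real.GammaSeq_pos (hs k) hn').le]
    gcongr
    exacts [Real.GammaSeq_pos (hs k) hn₀, Real.GammaSeq_le_GammaSeq (hs k) hn₀ hn]
  refine ge_of_tendsto hlim ?_
  filter_upwards [eventually_ge_atTop n₀] with n hn
  exact tsum_neg_pow_div_GammaSeq_nonneg hα0.le hα1 hαβ (by omega) hx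
    (hn₀x.trans_le (Real.rpow_le_rpow (Nat.cast_nonneg _) (Nat.cast_le.2 hn) hα0.le))

/-- For `0 < α < 1` and `x ≥ 0`, one has `E_{α,α}(−x) ≥ 0`. -/
theorem mittagLeffler_alpha_alpha_nonneg (α : ℝ) (hα0 : 0 < α) (hα1 : α < 1)
    (x : ℝ) (hx : 0 ≤ x) :
    0 ≤ mittagLefflerReal α α (-x) :=
  mittagLefflerReal_neg_nonneg hα0 hα1.le le_rfl hx
end

section
/- Let ℓ ≥ 1 be an integer, M > 0, and β₁, …, β_ℓ ∈ (0, 1). Suppose r > 0 and θ ∈ [−π, π] satisfy ∑_{j=1}^ℓ r^{−β_j} cos(β_j θ) = 1/M and ∑_{j=1}^ℓ r^{−β_j} sin(β_j θ) = 0 (equivalently, 1 − M ∑_{j=1}^ℓ (r e^{iθ})^{−β_j} = 0 where (r e^{iθ})^{−β_j} := r^{−β_j} e^{−i β_j θ}). Then θ = 0, and consequently ∑_{j=1}^ℓ r^{−β_j} = 1/M. In particular, all zeros of s ↦ 1 − M ∑_{j=1}^ℓ s^{−β_j} in the main sheet of the Riemann surface cut along the negative real axis are real and positive. -/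
/-- Zeros of `s ↦ 1 − M ∑_{j=1}^ℓ s^{−β_j}` in the main sheet of the Riemann surface
cut along the negative real axis are real and positive: if `r > 0`, `θ ∈ [−π, π]`,
`∑ r^{−β_j} cos(β_j θ) = 1/M` and `∑ r^{−β_j} sin(β_j θ) = 0` (with all `β_j ∈ (0,1)`
and `M > 0`), then `θ = 0`, and consequently `∑ r^{−β_j} = 1/M`. -/
theorem zeros_real_positive (ℓ : ℕ) (hℓ : 1 ≤ ℓ) (M : ℝ) (hM : 0 < M)
    (β : Fin ℓ → ℝ) (hβ : ∀ j, β j ∈ Set.Ioo (0:ℝ) 1)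
    (r θ : ℝ) (hr : 0 < r) (hθ : θ ∈ Set.Icc (-Real.pi) Real.pi)
    (h1 : ∑ j, r ^ (-(β j)) * Real.cos (β j * θ) = 1 / M)
    (h2 : ∑ j, r ^ (-(β j)) * Real.sin (β j * θ) = 0) :
    θ = 0 ∧ ∑ j, r ^ (-(β j)) = 1 / M := by
  have hne : (Finset.univ : Finset (Fin ℓ)).Nonempty := by
    have : Nonempty (Fin ℓ) := Fin.pos_iff_nonempty.mp hℓ; exact Finset.univ_nonempty
  have hθ0 : θ = 0 := by
    by_contra h
    rcases lt_or_gt_of_ne h with hneg | hpos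
    · have : ∑ j, r ^ (-(β j)) * Real.sin (β j * θ) < 0 := by
        apply Finset.sum_neg _ hne
        intro j _
        have hb := hβ j
        have hsin : Real.sin (β j * θ) < 0 := by
          apply Real.sin_neg_of_neg_of_neg_pi_lt
          · exact mul_neg_of_pos_of_neg hb.1 hneg
          · nlinarith [Real.pi_pos, hθ.1, hb.1, hb.2]
        exact mul_neg_of_pos_of_neg (Real.rpow_pos_of_pos hr _) hsin
      linarith
    · have : 0 < ∑ j, r ^ (-(β j)) * Real.sin (β j * θ) := by
        apply Finset.sum_pos _ hne
        intro j _
        have hb := hβ j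
        have hsin : 0 < Real.sin (β j * θ) := by
          apply Real.sin_pos_of_pos_of_lt_pi
          · exact mul_pos hb.1 hpos
          · nlinarith [Real.pi_pos, hθ.2, hb.1, hb.2]
        exact mul_pos (Real.rpow_pos_of_pos hr _) hsin
      linarith
  subst hθ0
  refine ⟨rfl, ?_⟩
  simpa using h1
end

section
/- Let 0 < β < 1, 0 ≤ c < 1, and M > 0. Then for every real s > 0 with M s^{−β} < 1, the function H(t) := ∑_{n=0}^∞ M^n t^{β n − c} / Γ(β n − c + 1) is defined for t > 0, the improper integral ∫₀^∞ e^{−s t} H(t) dt converges, and ∫₀^∞ e^{−s t} H(t) dt = s^{c−1} / (1 − M s^{−β}). -/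
/-!
Each term `Mⁿ tᵃ / Γ(a + 1)` of `H`, with `a = βn − c > −1`, has Laplace transform
`Mⁿ s^{−(a+1)}`, so integrating termwise turns the transform of `H` into the geometric series
`s^{c−1} ∑ (M s^{−β})ⁿ`. Termwise integration is legitimate because the terms are nonnegative
and their integrals are summable. Pointwise convergence of `H(t) = t^{−c} E_{β,1−c}(M t^β)`, with
`E_{β,d}(x) = ∑ xⁿ / Γ(βn + d)` the Mittag-Leffler function, comes from the crude bound
`Γ(a) ≥ A^{a−1} e^{−A}` (keep only `u > A` in Euler's integral), which for `A^β ≥ 2|x|`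
makes the terms of `E_{β,d}(x)` decay geometrically.
-/

open MeasureTheory Set Filter Real

lemma Real.rpow_sub_one_mul_exp_neg_le_Gamma {a A : ℝ} (ha : 1 ≤ a) (hA : 0 < A) :
    A ^ (a - 1) * exp (-A) ≤ Gamma a := by
  have hint : IntegrableOn (fun x ↦ exp (-x) * x ^ (a - 1)) (Ioi 0) :=
    GammaIntegral_convergent (by linarith)
  calc A ^ (a - 1) * exp (-A) = ∫ x in Ioi A, A ^ (a - 1) * exp (-x) := by
        rw [integral_const_mul, integral_exp_neg_Ioi]
    _ ≤ ∫ x in Ioi A, exp (-x) * x ^ (a - 1) := by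
        refine setIntegral_mono_on ((integrableOn_exp_neg_Ioi A).const_mul _)
          (hint.mono_set (Ioi_subset_Ioi hA.le)) measurableSet_Ioi fun x hx ↦ ?_
        rw [mul_comm]
        gcongr
        exact le_of_lt hx
    _ ≤ ∫ x in Ioi 0, exp (-x) * x ^ (a - 1) := by
        refine setIntegral_mono_set hint ?_ (Ioi_subset_Ioi hA.le).eventuallyLE
        filter_upwards [ae_restrict_mem measurableSet_Ioi] with x hx
        exact mul_nonneg (exp_pos _).le (rpow_nonneg (le_of_lt hx) _)
    _ = Gamma a := (Gamma_eq_integral (by linarith)).symm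

lemma summable_pow_div_Gamma_mul_add {β : ℝ} (hβ : 0 < β) (x d : ℝ) :
    Summable fun n : ℕ ↦ x ^ n / Gamma (β * n + d) := by
  set A := max 1 ((2 * |x|) ^ β⁻¹)
  have hA1 : 1 ≤ A := le_max_left _ _
  have hA : 0 < A := one_pos.trans_le hA1
  have hAβ : 2 * |x| ≤ A ^ β := by
    calc 2 * |x| = ((2 * |x|) ^ β⁻¹) ^ β := by
          rw [← rpow_mul (by positivity), inv_mul_cancel₀ hβ.ne', rpow_one]
      _ ≤ A ^ β := by gcongr; exact le_max_right _ _
  have hratio : |x| / A ^ β ≤ 1 / 2 := by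
    rw [div_le_iff₀ (by positivity)]; linarith
  refine Summable.of_norm_bounded_eventually_nat
    (summable_geometric_two.mul_left (A ^ (1 - d) * exp A)) ?_
  have hlarge : ∀ᶠ n : ℕ in atTop, 1 ≤ β * n + d :=
    (tendsto_natCast_atTop_atTop.const_mul_atTop hβ).atTop_add tendsto_const_nhds
      |>.eventually_ge_atTop 1
  filter_upwards [hlarge] with n hn
  have hΓ := rpow_sub_one_mul_exp_neg_le_Gamma hn hA
  have hpow : A ^ (β * n + d - 1) = (A ^ β) ^ n / A ^ (1 - d) := by
    rw [show β * n + d - 1 = β * n - (1 - d) by ring, rpow_sub hA, rpow_mul hA.le, rpow_natCast]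
  rw [norm_div, norm_pow, Real.norm_eq_abs, Real.norm_of_nonneg (Gamma_pos_of_pos (by linarith)).le]
  calc |x| ^ n / Gamma (β * n + d)
      ≤ |x| ^ n / (A ^ (β * n + d - 1) * exp (-A)) := by gcongr
    _ = A ^ (1 - d) * exp A * (|x| / A ^ β) ^ n := by
        rw [hpow, exp_neg, div_pow]; field_simp
    _ ≤ A ^ (1 - d) * exp A * (1 / 2) ^ n := by gcongr

lemma summable_mul_rpow_div_Gamma {β t : ℝ} (hβ : 0 < β) (ht : 0 < t) (M c : ℝ) :
    Summable fun n : ℕ ↦ M ^ n * t ^ (β * n - c) / Gamma (β * n - c + 1) := by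
  refine ((summable_pow_div_Gamma_mul_add hβ (M * t ^ β) (1 - c)).mul_left (t ^ (-c))).congr
    fun n ↦ ?_
  rw [sub_eq_add_neg (β * n), rpow_add ht, rpow_mul ht.le, rpow_natCast, add_assoc,
    ← sub_eq_neg_add, mul_pow]
  ring

lemma integrableOn_exp_neg_mul_mul_rpow {s a : ℝ} (hs : 0 < s) (ha : -1 < a) :
    IntegrableOn (fun t ↦ exp (-(s * t)) * t ^ a) (Ioi 0) := by
  refine (integrableOn_rpow_mul_exp_neg_mul_rpow ha one_pos hs).congr_fun (fun t _ ↦ ?_)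
    measurableSet_Ioi
  simp only [rpow_one, neg_mul]; ring

lemma integral_exp_neg_mul_mul_rpow {s a : ℝ} (hs : 0 < s) (ha : -1 < a) :
    ∫ t in Ioi 0, exp (-(s * t)) * t ^ a = Gamma (a + 1) * s ^ (-(a + 1)) := by
  have h := integral_rpow_mul_exp_neg_mul_Ioi (a := a + 1) (by linarith) hs
  simp only [add_sub_cancel_right] at h
  simp_rw [mul_comm (exp _), h, one_div, inv_rpow hs.le, rpow_neg hs.le, mul_comm]

lemma integrable_tsum_of_summable_integral_norm {α E : Type*} [MeasurableSpace α]
    {μ : Measure α} [NormedAddCommGroup E] {F : ℕ → α → E}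
    (hF_int : ∀ n, Integrable (F n) μ) (hF_sum : Summable fun n ↦ ∫ a, ‖F n a‖ ∂μ)
    (h_summable : ∀ᵐ a ∂μ, Summable (F · a)) :
    Integrable (fun a ↦ ∑' n, F n a) μ := by
  refine ⟨aestronglyMeasurable_of_tendsto_ae (f := fun N ↦ ∑ n ∈ Finset.range N, F n) atTop
    (fun N ↦ Finset.aestronglyMeasurable_sum _ fun n _ ↦ (hF_int n).1)
    (h_summable.mono fun a ha ↦ ?_), ?_⟩
  · simpa only [Finset.sum_apply] using ha.hasSum.tendsto_sum_nat
  calc ∫⁻ a, ‖∑' n, F n a‖ₑ ∂μ ≤ ∫⁻ a, ∑' n, ‖F n a‖ₑ ∂μ :=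
        lintegral_mono fun a ↦ enorm_tsum_le_tsum_enorm
    _ = ∑' n, ENNReal.ofReal (∫ a, ‖F n a‖ ∂μ) := by
        rw [lintegral_tsum fun n ↦ (hF_int n).1.enorm]
        simp_rw [ofReal_integral_norm_eq_lintegral_enorm (hF_int _)]
    _ = ENNReal.ofReal (∑' n, ∫ a, ‖F n a‖ ∂μ) :=
        (ENNReal.ofReal_tsum_of_nonneg (fun n ↦ integral_nonneg fun a ↦ norm_nonneg _) hF_sum).symm
    _ < ⊤ := ENNReal.ofReal_lt_top

section LaplaceTerm

variable {β c s : ℝ} (n : ℕ)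

lemma neg_one_lt_mul_natCast_sub (hβ : 0 ≤ β) (hc : c < 1) : -1 < β * n - c := by
  linarith [mul_nonneg hβ n.cast_nonneg]

lemma exp_neg_mul_mul_rpow_div_Gamma_eq (M t : ℝ) :
    exp (-(s * t)) * (M ^ n * t ^ (β * n - c) / Gamma (β * n - c + 1)) =
      M ^ n / Gamma (β * n - c + 1) * (exp (-(s * t)) * t ^ (β * n - c)) := by
  ring

lemma integrableOn_laplace_term (M : ℝ) (hβ : 0 ≤ β) (hc : c < 1) (hs : 0 < s) :
    IntegrableOn (fun t ↦ exp (-(s * t)) * (M ^ n * t ^ (β * n - c) / Gamma (β * n - c + 1)))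
      (Ioi 0) := by
  simp_rw [exp_neg_mul_mul_rpow_div_Gamma_eq]
  exact (integrableOn_exp_neg_mul_mul_rpow hs (neg_one_lt_mul_natCast_sub n hβ hc)).const_mul _

lemma integral_laplace_term (M : ℝ) (hβ : 0 ≤ β) (hc : c < 1) (hs : 0 < s) :
    ∫ t in Ioi 0, exp (-(s * t)) * (M ^ n * t ^ (β * n - c) / Gamma (β * n - c + 1)) =
      s ^ (c - 1) * (M * s ^ (-β)) ^ n := by
  have ha := neg_one_lt_mul_natCast_sub n hβ hc
  simp_rw [exp_neg_mul_mul_rpow_div_Gamma_eq, integral_const_mul,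
    integral_exp_neg_mul_mul_rpow hs ha]
  rw [mul_pow, ← rpow_mul_natCast hs.le, mul_left_comm (s ^ _), ← rpow_add hs,
    show c - 1 + -β * n = -(β * n - c + 1) by ring]
  field_simp [(Gamma_pos_of_pos (by linarith : 0 < β * n - c + 1)).ne']

lemma laplace_term_nonneg (hβ : 0 ≤ β) (hc : c < 1) {M : ℝ} (hM : 0 ≤ M) {t : ℝ} (ht : 0 ≤ t) :
    0 ≤ exp (-(s * t)) * (M ^ n * t ^ (β * n - c) / Gamma (β * n - c + 1)) := by
  have : 0 < Gamma (β * n - c + 1) :=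
    Gamma_pos_of_pos (by linarith [neg_one_lt_mul_natCast_sub n hβ hc])
  positivity

end LaplaceTerm

theorem laplace_transform_H_general (β c M : ℝ) (hβ0 : 0 < β)
    (hc1 : c < 1) (hM : 0 < M)
    (s : ℝ) (hs : 0 < s) (hMs : M * s ^ (-β) < 1) :
    (∀ t : ℝ, 0 < t →
      Summable fun n : ℕ => M ^ n * t ^ (β * n - c) / Real.Gamma (β * n - c + 1)) ∧
    MeasureTheory.IntegrableOn
      (fun t : ℝ => Real.exp (-(s * t)) *
        ∑' n : ℕ, M ^ n * t ^ (β * n - c) / Real.Gamma (β * n - c + 1))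
      (Set.Ioi 0) ∧
    ∫ t in Set.Ioi (0:ℝ), Real.exp (-(s * t)) *
        ∑' n : ℕ, M ^ n * t ^ (β * n - c) / Real.Gamma (β * n - c + 1)
      = s ^ (c - 1) / (1 - M * s ^ (-β)) := by
  have hsummable (t : ℝ) (ht : 0 < t) := summable_mul_rpow_div_Gamma hβ0 ht M c
  have hint (n : ℕ) := integrableOn_laplace_term n M hβ0.le hc1 hs
  have hgeom : HasSum (fun n : ℕ ↦ s ^ (c - 1) * (M * s ^ (-β)) ^ n)
      (s ^ (c - 1) / (1 - M * s ^ (-β))) :=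
    (hasSum_geometric_of_lt_one (by positivity) hMs).mul_left _
  have hnorm (n : ℕ) : ∫ t in Ioi 0,
      ‖exp (-(s * t)) * (M ^ n * t ^ (β * n - c) / Gamma (β * n - c + 1))‖ =
        s ^ (c - 1) * (M * s ^ (-β)) ^ n := by
    rw [← integral_laplace_term n M hβ0.le hc1 hs]
    exact setIntegral_congr_fun measurableSet_Ioi fun t ht ↦
      norm_of_nonneg (laplace_term_nonneg n hβ0.le hc1 hM.le (le_of_lt ht))
  have hsum_norm := (funext hnorm).symm ▸ hgeom.summable
  simp_rw [← tsum_mul_left]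
  refine ⟨hsummable, integrable_tsum_of_summable_integral_norm hint hsum_norm ?_, ?_⟩
  · filter_upwards [ae_restrict_mem measurableSet_Ioi] with t ht
    exact (hsummable t ht).mul_left _
  · rw [← (hasSum_integral_of_summable_integral_norm hint hsum_norm).tsum_eq]
    simp_rw [integral_laplace_term _ M hβ0.le hc1 hs]
    exact hgeom.tsum_eq

/-- For `0 < β < 1`, `0 ≤ c < 1`, `M > 0` and real `s > 0` with `M s^{−β} < 1`, the
function `H(t) = ∑_{n} M^n t^{βn−c} / Γ(βn−c+1)` is defined for `t > 0`, the Laplace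
integral `∫₀^∞ e^{−st} H(t) dt` converges and equals `s^{c−1} / (1 − M s^{−β})`. -/
theorem laplace_transform_H (β c M : ℝ) (hβ0 : 0 < β) (hβ1 : β < 1)
    (hc0 : 0 ≤ c) (hc1 : c < 1) (hM : 0 < M)
    (s : ℝ) (hs : 0 < s) (hMs : M * s ^ (-β) < 1) :
    (∀ t : ℝ, 0 < t →
      Summable fun n : ℕ => M ^ n * t ^ (β * n - c) / Real.Gamma (β * n - c + 1)) ∧
    MeasureTheory.IntegrableOn
      (fun t : ℝ => Real.exp (-(s * t)) *
        ∑' n : ℕ, M ^ n * t ^ (β * n - c) / Real.Gamma (β * n - c + 1))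
      (Set.Ioi 0) ∧
    ∫ t in Set.Ioi (0:ℝ), Real.exp (-(s * t)) *
        ∑' n : ℕ, M ^ n * t ^ (β * n - c) / Real.Gamma (β * n - c + 1)
      = s ^ (c - 1) / (1 - M * s ^ (-β)) :=
  laplace_transform_H_general β c M hβ0 hc1 hM s hs hMs
end

section
/- Let ℓ ≥ 1 be an integer, let q₁, …, q_ℓ be real numbers, and let 0 < α_ℓ < ⋯ < α₁ < 1 and 0 < α̃_ℓ < ⋯ < α̃₁ < 1 be two families of exponents with (α₁, …, α_ℓ) ≠ (α̃₁, …, α̃_ℓ). Let j₀ be the largest index with α_{j₀} ≠ α̃_{j₀}, and suppose α_{j₀} < α̃_{j₀}. Then for every s ∈ (0, 1) the denominator ∑_{j=1}^ℓ |s^{α_j} − s^{α̃_j}| is strictly positive, and lim_{s → 0+} [∑_{j=1}^ℓ q_j (s^{α_j} − s^{α̃_j})] / [∑_{j=1}^ℓ |s^{α_j} − s^{α̃_j}|] = q_{j₀}. -/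
open Filter Real


-- limit of s^p as s→0+ within (0,∞), for p > 0
lemma rpow_tendsto_zero {p : ℝ} (hp : 0 < p) :
    Tendsto (fun s : ℝ => s ^ p) (nhdsWithin 0 (Set.Ioi 0)) (nhds 0) := by
  have h := (Real.continuousAt_rpow_const 0 p (Or.inr hp.le)).continuousWithinAt
    (s := Set.Ioi 0)
  simpa [ContinuousWithinAt, Real.zero_rpow hp.ne'] using h

/-- Pointwise limit `Q₁(s) → q_{j₀}` as `s → 0+`: let `q₁, …, q_ℓ` be real numbers and
`0 < α_ℓ < ⋯ < α₁ < 1`, `0 < α̃_ℓ < ⋯ < α̃₁ < 1` be two distinct families of exponents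
(indexed here by `Fin ℓ` with strictly decreasing values). If `j₀` is the largest index
with `α_{j₀} ≠ α̃_{j₀}` and `α_{j₀} < α̃_{j₀}`, then for `s ∈ (0,1)` the denominator
`∑ |s^{α_j} − s^{α̃_j}|` is strictly positive and
`lim_{s→0+} (∑ q_j (s^{α_j} − s^{α̃_j})) / (∑ |s^{α_j} − s^{α̃_j}|) = q_{j₀}`. -/
theorem Q1_tendsto_qj0 (ℓ : ℕ) (hℓ : 1 ≤ ℓ) (q : Fin ℓ → ℝ) (α αt : Fin ℓ → ℝ)
    (hα : ∀ j, α j ∈ Set.Ioo (0:ℝ) 1) (hαt : ∀ j, αt j ∈ Set.Ioo (0:ℝ) 1)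
    (hanti : StrictAnti α) (htanti : StrictAnti αt)
    (hne : α ≠ αt) (j₀ : Fin ℓ) (hj₀ : α j₀ ≠ αt j₀)
    (hmax : ∀ j, j₀ < j → α j = αt j) (hlt : α j₀ < αt j₀) :
    (∀ s ∈ Set.Ioo (0:ℝ) 1, 0 < ∑ j, |s ^ (α j) - s ^ (αt j)|) ∧
    Filter.Tendsto (fun s : ℝ =>
        (∑ j, q j * (s ^ (α j) - s ^ (αt j))) / ∑ j, |s ^ (α j) - s ^ (αt j)|)
      (nhdsWithin 0 (Set.Ioi 0)) (nhds (q j₀)) := by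
  constructor
  · intro s hs
    apply Finset.sum_pos' (fun j _ => abs_nonneg _) ⟨j₀, Finset.mem_univ _, ?_⟩
    have : s ^ (αt j₀) < s ^ (α j₀) :=
      Real.rpow_lt_rpow_of_exponent_gt hs.1 hs.2 hlt
    rw [abs_pos]
    exact sub_ne_zero.mpr (ne_of_gt this)
  · -- rescaled exponents
    set a : Fin ℓ → ℝ := fun j => α j - α j₀ with ha
    set b : Fin ℓ → ℝ := fun j => αt j - α j₀ with hb
    -- exponent sign facts
    have hbpos : ∀ j, j ≤ j₀ → 0 < b j := by
      intro j hj
      have : αt j₀ ≤ αt j := htanti.antitone hj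
      simp only [hb, sub_pos]
      linarith
    have hapos : ∀ j, j < j₀ → 0 < a j := by
      intro j hj
      have := hanti hj
      simp only [ha, sub_pos]; linarith
    -- eventual equality with rescaled quotient
    have heq : ∀ s ∈ Set.Ioi (0:ℝ),
        (∑ j, q j * (s ^ (α j) - s ^ (αt j))) / ∑ j, |s ^ (α j) - s ^ (αt j)| =
        (∑ j, q j * (s ^ (a j) - s ^ (b j))) / ∑ j, |s ^ (a j) - s ^ (b j)| := by
      intro s hs
      have hs0 : (0:ℝ) < s := hs
      have hc : (0:ℝ) < s ^ (α j₀) := Real.rpow_pos_of_pos hs0 _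
      have hsplit : ∀ c : ℝ, s ^ c = s ^ (α j₀) * s ^ (c - α j₀) := by
        intro c; rw [← Real.rpow_add hs0]; ring_nf
      have hnum : (∑ j, q j * (s ^ (α j) - s ^ (αt j))) =
          s ^ (α j₀) * ∑ j, q j * (s ^ (a j) - s ^ (b j)) := by
        rw [Finset.mul_sum]
        refine Finset.sum_congr rfl fun j _ => ?_
        rw [hsplit (α j), hsplit (αt j)]; simp only [ha, hb]; ring
      have hden : (∑ j, |s ^ (α j) - s ^ (αt j)|) =
          s ^ (α j₀) * ∑ j, |s ^ (a j) - s ^ (b j)| := by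
        rw [Finset.mul_sum]
        refine Finset.sum_congr rfl fun j _ => ?_
        rw [hsplit (α j), hsplit (αt j), ← mul_sub, abs_mul, abs_of_pos hc]
      rw [hnum, hden, mul_div_mul_left _ _ hc.ne']
    -- limits of rescaled numerator and denominator
    have hterm : ∀ j : Fin ℓ, Tendsto (fun s : ℝ => s ^ (a j) - s ^ (b j))
        (nhdsWithin 0 (Set.Ioi 0)) (nhds (if j = j₀ then 1 else 0)) := by
      intro j
      rcases lt_trichotomy j j₀ with h | h | h
      · have := (rpow_tendsto_zero (hapos j h)).sub (rpow_tendsto_zero (hbpos j h.le))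
        simpa [Fin.ne_of_lt h] using this
      · subst h
        have ha0 : a j = 0 := by simp [ha]
        have := (rpow_tendsto_zero (hbpos j le_rfl))
        have h1 : Tendsto (fun s : ℝ => s ^ (a j) - s ^ (b j))
            (nhdsWithin 0 (Set.Ioi 0)) (nhds (1 - 0)) := by
          simpa [ha0, Real.rpow_zero] using (tendsto_const_nhds.sub this)
        simpa using h1
      · have hab : a j = b j := by simp [ha, hb, hmax j h]
        have : (fun s : ℝ => s ^ (a j) - s ^ (b j)) = fun _ => 0 := by
          funext s; rw [hab, sub_self]
        rw [this, if_neg (Fin.ne_of_lt h).symm]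
        exact tendsto_const_nhds
      done
    have hnumlim : Tendsto (fun s : ℝ => ∑ j, q j * (s ^ (a j) - s ^ (b j)))
        (nhdsWithin 0 (Set.Ioi 0)) (nhds (q j₀)) := by
      have : Tendsto (fun s : ℝ => ∑ j, q j * (s ^ (a j) - s ^ (b j)))
          (nhdsWithin 0 (Set.Ioi 0)) (nhds (∑ j, q j * (if j = j₀ then 1 else 0))) :=
        tendsto_finset_sum Finset.univ
          (fun j _ => (tendsto_const_nhds.mul (hterm j)))
      have hsum : (∑ j, q j * (if j = j₀ then (1:ℝ) else 0)) = q j₀ := by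
        rw [Finset.sum_eq_single j₀] <;> simp +contextual
      simpa [hsum] using this
    have hdenlim : Tendsto (fun s : ℝ => ∑ j, |s ^ (a j) - s ^ (b j)|)
        (nhdsWithin 0 (Set.Ioi 0)) (nhds 1) := by
      have : Tendsto (fun s : ℝ => ∑ j, |s ^ (a j) - s ^ (b j)|)
          (nhdsWithin 0 (Set.Ioi 0)) (nhds (∑ j, |if j = j₀ then (1:ℝ) else 0|)) :=
        tendsto_finset_sum Finset.univ (fun j _ => (hterm j).abs)
      have hsum : (∑ j, |if j = j₀ then (1:ℝ) else 0|) = 1 := by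
        rw [Finset.sum_eq_single j₀] <;> simp +contextual
      simpa [hsum] using this
    have := hnumlim.div hdenlim one_ne_zero
    simp only [div_one] at this
    exact this.congr' (eventually_nhdsWithin_of_forall fun s hs => (heq s hs).symm)
end
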